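/- Let T be a dissection tree of a graph G, and let C be a simple cycle of G of minimum weight. Let S be a lowest vertex of T such that V(C) ⊆ below(S). If S is a nonleaf vertex of T, then |S ∩ V(C)| ≥ 2. -/

import Mathlib

/-!
Pick `a` on the cycle outside `below(l)` and `b` on the cycle outside `below(r)`; since `S` lies
in both, neither is in `S`. If the cycle met `S` in at most one vertex, removing that vertex would
leave a path of the cycle joining `a` and `b` inside `(below(l) ∪ below(r)) \ S`. Because `S`
dissects `below(l)` and `below(r)`, membership in `below(l)` is constant along such a path, yet
`b ∈ below(l)` and `a ∉ below(l)`.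
-/

open SimpleGraph

universe u

variable {V : Type u}

/-- The weight of a walk: the sum of the weights of its edges. -/
def walkWeight {G : SimpleGraph V} (w : Sym2 V → ℕ) {u v : V} (p : G.Walk u v) : ℕ :=
  (p.edges.map w).sum

/-- A rooted binary tree whose vertices are labeled by subsets of `V`. -/
inductive DTree (V : Type u) : Type u
  | leaf : Set V → DTree V
  | node : Set V → DTree V → DTree V → DTree V

namespace DTree

/-- `below(S)`: the union of the vertex sets in the subtree rooted at `S`. -/
def belowSet : DTree V → Set V
  | leaf S => S
  | node S l r => S ∪ (l.belowSet ∪ r.belowSet)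

end DTree

/-- Node sets `V₁` and `V₂` are dissected by `S` in `G` if no node of `V₁ \ S`
is adjacent to a node of `V₂ \ S`. -/
def Dissects (G : SimpleGraph V) (S V₁ V₂ : Set V) : Prop :=
  ∀ a ∈ V₁ \ S, ∀ b ∈ V₂ \ S, ¬ G.Adj a b

namespace DTree

/-- Property 2 of a dissection tree: each nonleaf vertex `S` with children `S'`, `S''`
satisfies (a) `S ⊆ below(S') ∩ below(S'')` and (b) `below(S')` and `below(S'')` are
dissected by `S` in `G`. -/
def IsDissection (G : SimpleGraph V) : DTree V → Prop
  | leaf _ => True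
  | node S l r =>
      S ⊆ l.belowSet ∩ r.belowSet ∧ Dissects G S l.belowSet r.belowSet ∧
        l.IsDissection G ∧ r.IsDissection G

/-- A dissection tree of `G`: Property 1 (`below(root) = V(G)`) and Property 2. -/
def IsDissectionTree (G : SimpleGraph V) (t : DTree V) : Prop :=
  t.belowSet = Set.univ ∧ t.IsDissection G

/-- `IsSubtree s t` means `s` occurs as a subtree of `t`, i.e. `s` is a vertex of the
tree `t` (together with everything below it). -/
inductive IsSubtree : DTree V → DTree V → Prop
  | refl (t : DTree V) : IsSubtree t t
  | left {s l r : DTree V} {S : Set V} : IsSubtree s l → IsSubtree s (node S l r)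
  | right {s l r : DTree V} {S : Set V} : IsSubtree s r → IsSubtree s (node S l r)

end DTree

namespace DTree

lemma IsSubtree.isDissection {G : SimpleGraph V} {s t : DTree V} (hsub : IsSubtree s t)
    (ht : t.IsDissection G) : s.IsDissection G := by
  induction hsub with
  | refl => exact ht
  | left _ ih => exact ih ht.2.2.1
  | right _ ih => exact ih ht.2.2.2

end DTree

namespace Dissects

variable {G : SimpleGraph V} {S L R : Set V}

lemma mem_left_iff_of_adj (hd : Dissects G S L R) {u v : V} (huv : G.Adj u v)
    (hu : u ∈ (L ∪ R) \ S) (hv : v ∈ (L ∪ R) \ S) : u ∈ L ↔ v ∈ L := by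
  constructor
  · intro huL
    by_contra hvL
    exact hd u ⟨huL, hu.2⟩ v ⟨hv.1.resolve_left hvL, hv.2⟩ huv
  · intro hvL
    by_contra huL
    exact hd v ⟨hvL, hv.2⟩ u ⟨hu.1.resolve_left huL, hu.2⟩ huv.symm

lemma mem_left_iff_of_walk (hd : Dissects G S L R) {u v : V} (q : G.Walk u v)
    (hq : ∀ y ∈ q.support, y ∈ (L ∪ R) \ S) : u ∈ L ↔ v ∈ L := by
  induction q with
  | nil => rfl
  | cons huw q ih =>
    have hq' : ∀ y ∈ q.support, y ∈ (L ∪ R) \ S := fun y hy => hq y (by simp [hy])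
    exact (hd.mem_left_iff_of_adj huw (hq _ (by simp)) (hq' _ q.start_mem_support)).trans
      (ih hq')

end Dissects

namespace SimpleGraph.Walk

variable {G : SimpleGraph V} [DecidableEq V]

lemma exists_walk_support_subset_takeUntil {u v a b : V} (q : G.Walk u v)
    (ha : a ∈ q.support) (hb : b ∈ q.support) :
    ∃ r : G.Walk a b, ∀ y ∈ r.support,
      y ∈ (q.takeUntil a ha).support ∨ y ∈ (q.takeUntil b hb).support :=
  ⟨(q.takeUntil a ha).reverse.append (q.takeUntil b hb), fun y hy => by
    simpa [mem_support_append_iff] using hy⟩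

lemma IsPath.exists_walk_avoiding_end {u v a b : V} {q : G.Walk u v} (hq : q.IsPath)
    (ha : a ∈ q.support) (hb : b ∈ q.support) (hav : a ≠ v) (hbv : b ≠ v) :
    ∃ r : G.Walk a b, ∀ y ∈ r.support, y ∈ q.support ∧ y ≠ v := by
  obtain ⟨r, hr⟩ := q.exists_walk_support_subset_takeUntil ha hb
  refine ⟨r, fun y hy => ?_⟩
  rcases hr y hy with hy | hy
  · exact ⟨q.support_takeUntil_subset_support ha hy, fun hyv =>
      endpoint_notMem_support_takeUntil hq ha hav.symm (hyv ▸ hy)⟩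
  · exact ⟨q.support_takeUntil_subset_support hb hy, fun hyv =>
      endpoint_notMem_support_takeUntil hq hb hbv.symm (hyv ▸ hy)⟩

/-- Rotating the cycle to start at `s`, its tail is a path ending at `s`. -/
lemma IsCycle.exists_walk_avoiding {x a b s : V} {c : G.Walk x x} (hc : c.IsCycle)
    (hs : s ∈ c.support) (ha : a ∈ c.support) (hb : b ∈ c.support) (has : a ≠ s)
    (hbs : b ≠ s) : ∃ r : G.Walk a b, ∀ y ∈ r.support, y ∈ c.support ∧ y ≠ s := by
  set c' := c.rotate s hs
  have hc' : c'.IsCycle := hc.rotate hs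
  have mem_tail : ∀ {y}, y ∈ c.support → y ≠ s → y ∈ c'.tail.support := fun hy hys => by
    rw [← mem_support_rotate_iff c s hs, ← cons_support_tail hc'.not_nil] at hy
    exact (List.mem_cons.mp hy).resolve_left hys
  obtain ⟨r, hr⟩ :=
    hc'.isPath_tail.exists_walk_avoiding_end (mem_tail ha has) (mem_tail hb hbs) has hbs
  refine ⟨r, fun y hy => ⟨?_, (hr y hy).2⟩⟩
  rw [← mem_support_rotate_iff c s hs, ← cons_support_tail hc'.not_nil]
  exact List.mem_cons_of_mem _ (hr y hy).1

lemma IsCycle.exists_walk_avoiding_of_subsingleton {x a b : V} {c : G.Walk x x}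
    (hc : c.IsCycle) {S : Set V} (hS : (S ∩ {y | y ∈ c.support}).Subsingleton)
    (ha : a ∈ c.support) (haS : a ∉ S) (hb : b ∈ c.support) (hbS : b ∉ S) :
    ∃ r : G.Walk a b, ∀ y ∈ r.support, y ∈ c.support ∧ y ∉ S := by
  by_cases hmeet : ∃ s ∈ S, s ∈ c.support
  · obtain ⟨s, hsS, hs⟩ := hmeet
    obtain ⟨r, hr⟩ := hc.exists_walk_avoiding hs ha hb (ne_of_mem_of_not_mem hsS haS).symm
      (ne_of_mem_of_not_mem hsS hbS).symm
    exact ⟨r, fun y hy => ⟨(hr y hy).1, fun hyS =>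
      (hr y hy).2 (hS ⟨hyS, (hr y hy).1⟩ ⟨hsS, hs⟩)⟩⟩
  · obtain ⟨r, hr⟩ := c.exists_walk_support_subset_takeUntil ha hb
    have hrc : ∀ y ∈ r.support, y ∈ c.support := fun y hy =>
      (hr y hy).elim (c.support_takeUntil_subset_support ha ·)
        (c.support_takeUntil_subset_support hb ·)
    exact ⟨r, fun y hy => ⟨hrc y hy, fun hyS => hmeet ⟨y, hyS, hrc y hy⟩⟩⟩

end SimpleGraph.Walk

open DTree in
theorem two_le_card_inter_of_lowest_general {V : Type*} (G : SimpleGraph V)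
    (t : DTree V) (ht : IsDissectionTree G t)
    (x : V) (p : G.Walk x x) (hp : p.IsCycle)
    (S : Set V) (l r : DTree V)
    (hsub : IsSubtree (DTree.node S l r) t)
    (hC : {a | a ∈ p.support} ⊆ (DTree.node S l r).belowSet)
    (hl : ¬ {a | a ∈ p.support} ⊆ l.belowSet)
    (hr : ¬ {a | a ∈ p.support} ⊆ r.belowSet) :
    2 ≤ (S ∩ {a | a ∈ p.support}).ncard := by
  classical
  obtain ⟨hSlr, hdis, -, -⟩ := hsub.isDissection ht.2
  obtain ⟨a, haP, hal⟩ := Set.not_subset.mp hl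
  obtain ⟨b, hbP, hbr⟩ := Set.not_subset.mp hr
  have haS : a ∉ S := fun h => hal (hSlr h).1
  have hbS : b ∉ S := fun h => hbr (hSlr h).2
  by_contra! hlt
  have := (p.support.finite_toSet.subset (Set.inter_subset_right (s := S))).to_subtype
  have hS : (S ∩ {a | a ∈ p.support}).Subsingleton :=
    Set.ncard_le_one_iff_subsingleton.mp (by omega)
  obtain ⟨q, hq⟩ := hp.exists_walk_avoiding_of_subsingleton hS haP haS hbP hbS
  have hqlr : ∀ y ∈ q.support, y ∈ (l.belowSet ∪ r.belowSet) \ S := fun y hy =>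
    ⟨(hC (hq y hy).1).resolve_left (hq y hy).2, (hq y hy).2⟩
  have hbl : b ∈ l.belowSet := ((hC hbP).resolve_left hbS).resolve_right hbr
  exact hal ((hdis.mem_left_iff_of_walk q hqlr).mpr hbl)

open DTree in
/-- Let `T` be a dissection tree of `G` and let `C` be a
minimum-weight simple cycle of `G`.  Let `S` be a lowest vertex of `T` such that
`V(C) ⊆ below(S)` (no child of `S` contains `V(C)` below it).  If `S` is a nonleaf
vertex of `T`, then `|S ∩ V(C)| ≥ 2`. -/
theorem two_le_card_inter_of_lowest {V : Type*} (G : SimpleGraph V) (w : Sym2 V → ℕ)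
    (t : DTree V) (ht : IsDissectionTree G t)
    (x : V) (p : G.Walk x x) (hp : p.IsCycle)
    (hmin : ∀ (y : V) (q : G.Walk y y), q.IsCycle → walkWeight w p ≤ walkWeight w q)
    (S : Set V) (l r : DTree V)
    (hsub : IsSubtree (DTree.node S l r) t)
    (hC : {a | a ∈ p.support} ⊆ (DTree.node S l r).belowSet)
    (hl : ¬ {a | a ∈ p.support} ⊆ l.belowSet)
    (hr : ¬ {a | a ∈ p.support} ⊆ r.belowSet) :
    2 ≤ (S ∩ {a | a ∈ p.support}).ncard :=
  two_le_card_inter_of_lowest_general G t ht x p hp S l r hsub hC hl hr
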